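/- For every real μ ≥ 0 and every real r > 0, the improper integral ∫_{-∞}^{∞} e^{-r² e^{2s}} e^{-μ² e^{-2s}/4 + s} ds converges and (2/√π) · ∫_{-∞}^{∞} e^{-r² e^{2s}} e^{-μ² e^{-2s}/4 + s} ds = e^{-μ r} / r. -/

import Mathlib

/-! Substituting `t = eˢ` turns the integral into `∫₀^∞ exp (-r²t² - μ²/(4t²)) dt`, and
completing the square, `r²t² + μ²/(4t²) = (rt - μ/(2t))² + μr`, reduces it to the
Cauchy–Schlömilch identity `∫₀^∞ f (at - b/t) dt = (2a)⁻¹ ∫ f` for even integrable `f`.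
That identity comes from the substitution `u = at - b/t`, a bijection `(0, ∞) → ℝ` with
`du = (a + b/t²) dt`, together with the involution `t ↦ b/(at)`, which flips the sign of `u`
and so shows that the parts `a dt` and `(b/t²) dt` of `du` contribute equally. -/

open Real MeasureTheory Set

section ExpSubstitution

variable {E : Type*} [NormedAddCommGroup E] [NormedSpace ℝ E]

theorem integrableOn_Ioi_zero_iff_integrable_exp_smul_comp_exp (g : ℝ → E) :
    IntegrableOn g (Ioi 0) ↔ Integrable (fun s => exp s • g (exp s)) := by
  simpa only [image_univ, range_exp, abs_exp, integrableOn_univ] using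
    integrableOn_image_iff_integrableOn_abs_deriv_smul MeasurableSet.univ
      (fun s _ => (hasDerivAt_exp s).hasDerivWithinAt) exp_injective.injOn g

theorem integral_Ioi_zero_eq_integral_exp_smul_comp_exp (g : ℝ → E) :
    ∫ t in Ioi 0, g t = ∫ s, exp s • g (exp s) := by
  simpa only [image_univ, range_exp, abs_exp, Measure.restrict_univ] using
    integral_image_eq_integral_abs_deriv_smul MeasurableSet.univ
      (fun s _ => (hasDerivAt_exp s).hasDerivWithinAt) exp_injective.injOn g

end ExpSubstitution

section CauchySchlomilch

theorem hasDerivAt_mul_sub_div (a b : ℝ) {t : ℝ} (ht : t ≠ 0) :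
    HasDerivAt (fun t => a * t - b / t) (a + b / t ^ 2) t := by
  have h : HasDerivAt (fun t => a * t - b * t⁻¹) (a * 1 - b * -(t ^ 2)⁻¹) t :=
    ((hasDerivAt_id' t).const_mul a).sub ((hasDerivAt_inv ht).const_mul b)
  simpa only [div_eq_mul_inv, mul_one, mul_neg, sub_neg_eq_add] using h

theorem hasDerivAt_div_mul (a b : ℝ) {t : ℝ} (ht : t ≠ 0) :
    HasDerivAt (fun t => b / (a * t)) (-(b / (a * t ^ 2))) t := by
  have h : HasDerivAt (fun t => b / a * t⁻¹) (b / a * -(t ^ 2)⁻¹) t :=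
    (hasDerivAt_inv ht).const_mul _
  convert h using 1
  · ext t; rw [div_mul_eq_div_div, div_eq_mul_inv]
  · rw [mul_neg, ← div_eq_mul_inv, div_div]

variable {a b : ℝ}

theorem strictMonoOn_mul_sub_div (ha : 0 < a) (hb : 0 ≤ b) :
    StrictMonoOn (fun t => a * t - b / t) (Ioi 0) := by
  intro x hx y _ hxy
  have h₁ : a * x < a * y := by gcongr
  have h₂ : b / y ≤ b / x := div_le_div_of_nonneg_left hb hx hxy.le
  simp only
  linarith

theorem image_mul_sub_div_Ioi_zero (ha : 0 < a) (hb : 0 < b) :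
    (fun t => a * t - b / t) '' Ioi 0 = univ := by
  refine eq_univ_of_forall fun u => ?_
  obtain ⟨d, hd, hd_sq⟩ : ∃ d, 0 ≤ d ∧ d ^ 2 = u ^ 2 + 4 * a * b :=
    ⟨_, sqrt_nonneg _, sq_sqrt (by positivity)⟩
  have hpos : 0 < u + d := by nlinarith
  refine ⟨(u + d) / (2 * a), mem_Ioi.mpr (by positivity), ?_⟩
  field_simp
  linear_combination hd_sq

theorem mul_sub_div_comp_div_mul (ha : a ≠ 0) (hb : b ≠ 0) {t : ℝ} (ht : t ≠ 0) :
    a * (b / (a * t)) - b / (b / (a * t)) = -(a * t - b / t) := by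
  field_simp
  ring

theorem image_div_mul_Ioi_zero (ha : 0 < a) (hb : 0 < b) :
    (fun t => b / (a * t)) '' Ioi 0 = Ioi 0 := by
  ext u
  constructor
  · rintro ⟨t, ht, rfl⟩
    exact div_pos hb (mul_pos ha ht)
  · intro hu
    refine ⟨b / (a * u), div_pos hb (mul_pos ha hu), ?_⟩
    field_simp

theorem strictAntiOn_div_mul (ha : 0 < a) (hb : 0 < b) :
    StrictAntiOn (fun t => b / (a * t)) (Ioi 0) := fun _ hx _ _ hxy =>
  div_lt_div_of_pos_left hb (mul_pos ha hx) (mul_lt_mul_of_pos_left hxy ha)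

variable {E : Type*} [NormedAddCommGroup E] [NormedSpace ℝ E]

theorem integral_comp_mul_sub_div_Ioi_zero_eq_integral_div_smul {f : ℝ → E}
    (hf : ∀ u, f (-u) = f u) (ha : 0 < a) (hb : 0 < b) :
    ∫ t in Ioi 0, f (a * t - b / t) = ∫ t in Ioi 0, (b / (a * t ^ 2)) • f (a * t - b / t) := by
  have h := integral_image_eq_integral_abs_deriv_smul measurableSet_Ioi
    (fun t ht => (hasDerivAt_div_mul a b (ne_of_gt ht)).hasDerivWithinAt)
    (strictAntiOn_div_mul ha hb).injOn fun u => f (a * u - b / u)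
  rw [image_div_mul_Ioi_zero ha hb] at h
  refine h.trans (setIntegral_congr_fun measurableSet_Ioi fun t ht => ?_)
  have ht : 0 < t := ht
  simp only [abs_neg, abs_of_pos (by positivity : 0 < b / (a * t ^ 2)),
    mul_sub_div_comp_div_mul ha.ne' hb.ne' ht.ne', hf]

theorem integrableOn_abs_deriv_smul_comp_mul_sub_div {f : ℝ → E} (hf : Integrable f)
    (ha : 0 < a) (hb : 0 < b) :
    IntegrableOn (fun t => |a + b / t ^ 2| • f (a * t - b / t)) (Ioi 0) :=
  (integrableOn_image_iff_integrableOn_abs_deriv_smul measurableSet_Ioi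
    (fun t ht => (hasDerivAt_mul_sub_div a b (ne_of_gt ht)).hasDerivWithinAt)
    (strictMonoOn_mul_sub_div ha hb.le).injOn f).mp
    (by rw [image_mul_sub_div_Ioi_zero ha hb]; exact hf.integrableOn)

theorem integrableOn_comp_mul_sub_div_Ioi_zero {f : ℝ → E} (hf : Integrable f)
    (ha : 0 < a) (hb : 0 < b) :
    IntegrableOn (fun t => f (a * t - b / t)) (Ioi 0) := by
  have hbound : ∀ t : ℝ, ‖t ^ 2 / (a * t ^ 2 + b)‖ ≤ a⁻¹ := fun t => by
    rw [norm_of_nonneg (by positivity), div_le_iff₀ (by positivity)]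
    field_simp
    linarith
  have h : IntegrableOn (fun t => (t ^ 2 / (a * t ^ 2 + b)) • |a + b / t ^ 2| • f (a * t - b / t))
      (Ioi 0) :=
    (integrableOn_abs_deriv_smul_comp_mul_sub_div hf ha hb).bdd_smul a⁻¹
      (by fun_prop : Measurable fun t : ℝ => t ^ 2 / (a * t ^ 2 + b)).aestronglyMeasurable
      (.of_forall hbound)
  refine h.congr_fun (fun t ht => ?_) measurableSet_Ioi
  have ht : 0 < t := ht
  have hinv : t ^ 2 / (a * t ^ 2 + b) * (a + b / t ^ 2) = 1 := by field_simp
  simp only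
  rw [abs_of_pos (by positivity), smul_smul, hinv, one_smul]

theorem integral_comp_mul_sub_div_Ioi_zero {f : ℝ → E} (hf : Integrable f)
    (heven : ∀ u, f (-u) = f u) (ha : 0 < a) (hb : 0 < b) :
    ∫ t in Ioi 0, f (a * t - b / t) = (2 * a)⁻¹ • ∫ u, f u := by
  have hφF := integrableOn_abs_deriv_smul_comp_mul_sub_div hf ha hb
  have hF : IntegrableOn (fun t => a • f (a * t - b / t)) (Ioi 0) :=
    (integrableOn_comp_mul_sub_div_Ioi_zero hf ha hb).smul a
  have hchange := integral_image_eq_integral_abs_deriv_smul measurableSet_Ioi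
    (fun t ht => (hasDerivAt_mul_sub_div a b (ne_of_gt ht)).hasDerivWithinAt)
    (strictMonoOn_mul_sub_div ha hb.le).injOn f
  rw [image_mul_sub_div_Ioi_zero ha hb, Measure.restrict_univ] at hchange
  have hsplit : ∫ u, f u = (2 * a) • ∫ t in Ioi 0, f (a * t - b / t) :=
    calc ∫ u, f u = ∫ t in Ioi 0, |a + b / t ^ 2| • f (a * t - b / t) := hchange
      _ = (∫ t in Ioi 0, a • f (a * t - b / t)) +
            ∫ t in Ioi 0, (|a + b / t ^ 2| • f (a * t - b / t) - a • f (a * t - b / t)) := by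
        rw [← integral_add hF]
        · simp only [add_sub_cancel]
        · exact hφF.sub hF
      _ = (a • ∫ t in Ioi 0, f (a * t - b / t)) +
            a • ∫ t in Ioi 0, (b / (a * t ^ 2)) • f (a * t - b / t) := by
        congr 1
        · exact integral_smul a _
        rw [← integral_smul]
        refine setIntegral_congr_fun measurableSet_Ioi fun t ht => ?_
        have ht : 0 < t := ht
        rw [abs_of_pos (by positivity), ← sub_smul, smul_smul]
        congr 1
        field_simp
        ring
      _ = (2 * a) • ∫ t in Ioi 0, f (a * t - b / t) := by
        rw [← integral_comp_mul_sub_div_Ioi_zero_eq_integral_div_smul heven ha hb, two_mul,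
          add_smul]
  rw [hsplit, smul_smul, inv_mul_cancel₀ (by positivity), one_smul]

end CauchySchlomilch

theorem integral_exp_neg_sq_mul_sub_div_Ioi_zero {a b : ℝ} (ha : 0 < a) (hb : 0 ≤ b) :
    IntegrableOn (fun t => exp (-(a * t - b / t) ^ 2)) (Ioi 0) ∧
      ∫ t in Ioi 0, exp (-(a * t - b / t) ^ 2) = √π / (2 * a) := by
  rcases hb.eq_or_lt with rfl | hb
  · simp only [zero_div, sub_zero, mul_pow, ← neg_mul]
    refine ⟨(integrable_exp_neg_mul_sq (by positivity)).integrableOn, ?_⟩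
    rw [integral_gaussian_Ioi, sqrt_div pi_pos.le, sqrt_sq ha.le]
    ring
  · have hg : Integrable fun u : ℝ => exp (-u ^ 2) := by
      simpa using integrable_exp_neg_mul_sq one_pos
    refine ⟨integrableOn_comp_mul_sub_div_Ioi_zero hg ha hb, ?_⟩
    have hgauss : ∫ u, exp (-u ^ 2) = √π := by simpa using integral_gaussian 1
    rw [integral_comp_mul_sub_div_Ioi_zero hg (fun u => by rw [neg_sq]) ha hb, smul_eq_mul,
      hgauss]
    field_simp

theorem exp_mul_exp_neg_sq_mul_sub_div_exp (μ r s : ℝ) :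
    exp s * (exp (-μ * r) * exp (-(r * exp s - μ / 2 / exp s) ^ 2)) =
      exp (-r ^ 2 * exp (2 * s)) * exp (-μ ^ 2 * exp (-2 * s) / 4 + s) := by
  have h₂ : exp (2 * s) = exp s ^ 2 := by rw [← exp_nat_mul]; norm_num
  have h₂' : exp (-2 * s) = (exp s ^ 2)⁻¹ := by rw [neg_mul, exp_neg, h₂]
  simp only [← exp_add, h₂, h₂']
  congr 1
  field_simp
  ring

theorem integral_repr_helmholtz_kernel (μ r : ℝ) (hμ : 0 ≤ μ) (hr : 0 < r) :
    MeasureTheory.Integrable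
        (fun s : ℝ =>
          Real.exp (-r ^ 2 * Real.exp (2 * s)) *
            Real.exp (-μ ^ 2 * Real.exp (-2 * s) / 4 + s)) ∧
      (2 / Real.sqrt π) *
          ∫ s : ℝ, Real.exp (-r ^ 2 * Real.exp (2 * s)) *
            Real.exp (-μ ^ 2 * Real.exp (-2 * s) / 4 + s) =
        Real.exp (-μ * r) / r := by
  obtain ⟨hint, hval⟩ := integral_exp_neg_sq_mul_sub_div_Ioi_zero hr (by positivity : 0 ≤ μ / 2)
  set g : ℝ → ℝ := fun t => exp (-μ * r) * exp (-(r * t - μ / 2 / t) ^ 2)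
  have hg : (fun s => exp (-r ^ 2 * exp (2 * s)) * exp (-μ ^ 2 * exp (-2 * s) / 4 + s)) =
      fun s => exp s • g (exp s) :=
    funext fun s => (exp_mul_exp_neg_sq_mul_sub_div_exp μ r s).symm
  refine ⟨hg ▸ (integrableOn_Ioi_zero_iff_integrable_exp_smul_comp_exp g).mp
    (hint.const_mul _), ?_⟩
  rw [hg, ← integral_Ioi_zero_eq_integral_exp_smul_comp_exp, integral_const_mul, hval]
  field_simp
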